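/- Let χ : [a, a+1] → ℂ be continuous with polar form χ = |χ|e^{iη}, η of class C¹. Then ∫ₐ^{a+1}|χ| dx ≤ |∫ₐ^{a+1} χ(y) dy| + (∫ₐ^{a+1}|η'(y)| dy)·sup_{a≤y≤a+1}|∫ₐ^y χ(y') dy'|. -/

import Mathlib

/-!
Since `χ = |χ| e^{iη}`, the modulus `|χ| = e^{-iη} χ` is the real part of a complex integrand,
so `∫ |χ| ≤ |∫ e^{-iη} χ|`. Integrating by parts against the primitive `G(x) = ∫ₐˣ χ` gives
`∫ e^{-iη} χ = e^{-iη(b)} G(b) - ∫ (e^{-iη})' G`, and `|(e^{-iη})'| = |η'|`.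
-/

open Set MeasureTheory intervalIntegral

section Primitive

variable {E : Type*} [NormedAddCommGroup E] [NormedSpace ℝ E]

theorem hasDerivAt_primitive_of_continuousOn [CompleteSpace E] {f : ℝ → E} {a b x : ℝ}
    (hf : ContinuousOn f (Icc a b)) (hx : x ∈ Ioo a b) :
    HasDerivAt (fun y => ∫ t in a..y, f t) (f x) x :=
  integral_hasDerivAt_right
    ((hf.mono (Icc_subset_Icc le_rfl hx.2.le)).intervalIntegrable_of_Icc hx.1.le)
    ((hf.mono Ioo_subset_Icc_self).stronglyMeasurableAtFilter isOpen_Ioo x hx)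
    ((hf.mono Ioo_subset_Icc_self).continuousAt (Ioo_mem_nhds hx.1 hx.2))

theorem continuousOn_primitive_Icc {f : ℝ → E} {a b : ℝ} (hab : a ≤ b)
    (hf : ContinuousOn f (Icc a b)) :
    ContinuousOn (fun y => ∫ t in a..y, f t) (Icc a b) := by
  have := continuousOn_primitive_interval (μ := volume) (f := f) (a := a) (b := b)
    (by rw [uIcc_of_le hab]; exact hf.integrableOn_Icc)
  rwa [uIcc_of_le hab] at this

theorem norm_primitive_le_sSup {f : ℝ → E} {a b y : ℝ} (hab : a ≤ b)
    (hf : ContinuousOn f (Icc a b)) (hy : y ∈ Icc a b) :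
    ‖∫ t in a..y, f t‖ ≤ sSup ((fun y => ‖∫ t in a..y, f t‖) '' Icc a b) :=
  le_csSup (isCompact_Icc.image_of_continuousOn
    (continuousOn_primitive_Icc hab hf).norm).bddAbove (mem_image_of_mem _ hy)

end Primitive

theorem norm_integral_mul_le_of_norm_primitive_le {A : Type*} [NormedRing A] [NormedAlgebra ℝ A]
    [CompleteSpace A] {u u' f : ℝ → A} {a b M : ℝ} (hab : a ≤ b)
    (hu : ∀ x ∈ Icc a b, HasDerivAt u (u' x) x) (hu' : IntervalIntegrable u' volume a b)
    (hf : ContinuousOn f (Icc a b)) (hM : ∀ y ∈ Icc a b, ‖∫ t in a..y, f t‖ ≤ M) :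
    ‖∫ x in a..b, u x * f x‖ ≤
      ‖u b‖ * ‖∫ x in a..b, f x‖ + (∫ x in a..b, ‖u' x‖) * M := by
  set G : ℝ → A := fun y => ∫ t in a..y, f t
  have hG : ContinuousOn G (Icc a b) := continuousOn_primitive_Icc hab hf
  have hparts : ∫ x in a..b, u x * f x = u b * G b - ∫ x in a..b, u' x * G x := by
    rw [integral_mul_deriv_eq_deriv_mul_of_hasDerivAt (v := G)
      (fun x hx => (hu x (by rwa [uIcc_of_le hab] at hx)).continuousAt.continuousWithinAt)
      (by rwa [uIcc_of_le hab])
      (fun x hx => hu x (Ioo_subset_Icc_self (by rwa [min_eq_left hab, max_eq_right hab] at hx)))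
      (fun x hx => hasDerivAt_primitive_of_continuousOn hf
        (by rwa [min_eq_left hab, max_eq_right hab] at hx))
      hu' (hf.intervalIntegrable_of_Icc hab)]
    simp [G]
  have hrest : ‖∫ x in a..b, u' x * G x‖ ≤ (∫ x in a..b, ‖u' x‖) * M :=
    calc ‖∫ x in a..b, u' x * G x‖ ≤ ∫ x in a..b, ‖u' x * G x‖ :=
          norm_integral_le_integral_norm hab
      _ ≤ ∫ x in a..b, ‖u' x‖ * M := by
          refine integral_mono_on hab ?_ (hu'.norm.mul_const M) fun x hx => ?_
          · exact (hu'.mul_continuousOn (by rwa [uIcc_of_le hab])).norm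
          · exact (norm_mul_le _ _).trans
              (mul_le_mul_of_nonneg_left (hM x hx) (norm_nonneg _))
      _ = (∫ x in a..b, ‖u' x‖) * M := integral_mul_const M _
  calc ‖∫ x in a..b, u x * f x‖ ≤ ‖u b * G b‖ + ‖∫ x in a..b, u' x * G x‖ := by
        rw [hparts]; exact norm_sub_le _ _
    _ ≤ ‖u b‖ * ‖∫ x in a..b, f x‖ + (∫ x in a..b, ‖u' x‖) * M :=
        add_le_add (norm_mul_le _ _) hrest

theorem hasDerivAt_cexp_neg_I_mul {η : ℝ → ℝ} {η' x : ℝ} (hη : HasDerivAt η η' x) :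
    HasDerivAt (fun y => Complex.exp (-(Complex.I * η y)))
      (-(Complex.I * η') * Complex.exp (-(Complex.I * η x))) x := by
  simpa [mul_comm] using ((hη.ofReal_comp.const_mul Complex.I).neg).cexp

theorem norm_cexp_neg_I_mul (t : ℝ) : ‖Complex.exp (-(Complex.I * t))‖ = 1 := by
  simp [Complex.norm_exp]

theorem ofReal_norm_eq_cexp_neg_I_mul_mul {z : ℂ} {t : ℝ}
    (h : z = (‖z‖ : ℂ) * Complex.exp (Complex.I * t)) :
    ((‖z‖ : ℝ) : ℂ) = Complex.exp (-(Complex.I * t)) * z := by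
  nth_rewrite 2 [h]
  rw [mul_left_comm, ← Complex.exp_add, neg_add_cancel, Complex.exp_zero, mul_one]

open intervalIntegral in
theorem stmt10_general (a : ℝ) (χ : ℝ → ℂ) (η η' : ℝ → ℝ)
    (hχ : ContinuousOn χ (Set.Icc a (a + 1)))
    (hpolar : ∀ x ∈ Set.Icc a (a + 1),
      χ x = (‖χ x‖ : ℂ) * Complex.exp (Complex.I * η x))
    (hη : ∀ x ∈ Set.Icc a (a + 1), HasDerivAt η (η' x) x)
    (hη' : ContinuousOn η' (Set.Icc a (a + 1))) :
    (∫ x in a..(a + 1), ‖χ x‖) ≤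
      ‖∫ y in a..(a + 1), χ y‖ +
        (∫ y in a..(a + 1), |η' y|) *
          sSup ((fun y => ‖∫ t in a..y, χ t‖) '' Set.Icc a (a + 1)) := by
  have hab : a ≤ a + 1 := by linarith
  set u : ℝ → ℂ := fun x => Complex.exp (-(Complex.I * η x))
  have hηc : ContinuousOn η (Icc a (a + 1)) := fun x hx =>
    (hη x hx).continuousAt.continuousWithinAt
  have hu'c : ContinuousOn (fun x => -(Complex.I * η' x) * u x) (Icc a (a + 1)) := by fun_prop
  have hbound := norm_integral_mul_le_of_norm_primitive_le hab
    (fun x hx => hasDerivAt_cexp_neg_I_mul (hη x hx)) (hu'c.intervalIntegrable_of_Icc hab) hχ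
    fun y hy => norm_primitive_le_sSup hab hχ hy
  calc (∫ x in a..(a + 1), ‖χ x‖)
      = (((∫ x in a..(a + 1), ‖χ x‖ : ℝ) : ℂ)).re := by simp
    _ = (∫ x in a..(a + 1), u x * χ x).re := by
      rw [← integral_ofReal, integral_congr fun x hx =>
        ofReal_norm_eq_cexp_neg_I_mul_mul (hpolar x (by rwa [uIcc_of_le hab] at hx))]
    _ ≤ ‖∫ x in a..(a + 1), u x * χ x‖ := Complex.re_le_norm _
    _ ≤ _ := by simpa [u, norm_cexp_neg_I_mul] using hbound

open intervalIntegral in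
theorem stmt10 (a : ℝ) (χ : ℝ → ℂ) (η η' : ℝ → ℝ)
    (hχ : ContinuousOn χ (Set.Icc a (a + 1)))
    (hne : ∀ x ∈ Set.Icc a (a + 1), χ x ≠ 0)
    (hpolar : ∀ x ∈ Set.Icc a (a + 1),
      χ x = (‖χ x‖ : ℂ) * Complex.exp (Complex.I * η x))
    (hη : ∀ x ∈ Set.Icc a (a + 1), HasDerivAt η (η' x) x)
    (hη' : ContinuousOn η' (Set.Icc a (a + 1))) :
    (∫ x in a..(a + 1), ‖χ x‖) ≤
      ‖∫ y in a..(a + 1), χ y‖ +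
        (∫ y in a..(a + 1), |η' y|) *
          sSup ((fun y => ‖∫ t in a..y, χ t‖) '' Set.Icc a (a + 1)) :=
  stmt10_general a χ η η' hχ hpolar hη hη'
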